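/- arXiv:2211.15715 — 2 statements merged into one kernel-verified Lean document; each statement's English description precedes it below -/
import Mathlib

section
/- For any integers 1 ≤ k ≤ d there exists a constant c > 0 (depending only on d and k) such that for all integers n > k one has c · Δ_{k,d}(n) ≤ Δ'_{k,d}(n). -/
open scoped RealInnerProductSpace

/-- The Gram matrix of a collection of `k` vectors in `ℝ^d`. -/
noncomputable def gram {d k : ℕ} (v : Fin k → EuclideanSpace ℝ (Fin d)) :
    Matrix (Fin k) (Fin k) ℝ :=
  Matrix.of fun i j => ⟪v i, v j⟫

/-- `vol v` is the `k`-dimensional volume of the parallelepiped spanned by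
`v 1, …, v k`, i.e. the square root of the determinant of their Gram matrix.
For `k = 0` it equals `1`. -/
noncomputable def vol {d k : ℕ} (v : Fin k → EuclideanSpace ℝ (Fin d)) : ℝ :=
  Real.sqrt (gram v).det

/-- The `k`-dimensional volume of the simplex with vertices `p 0, …, p k`. -/
noncomputable def simplexVol {d k : ℕ} (p : Fin (k + 1) → EuclideanSpace ℝ (Fin d)) : ℝ :=
  (Nat.factorial k : ℝ)⁻¹ * vol (fun i : Fin k => p i.succ - p 0)

/-- The minimum, over all `(k+1)`-element subsets of `X`, of the `k`-dimensional
volume of the simplex they span. -/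
noncomputable def minSimplexVol (d k : ℕ) (X : Finset (EuclideanSpace ℝ (Fin d))) : ℝ :=
  sInf { v : ℝ | ∃ p : Fin (k + 1) → EuclideanSpace ℝ (Fin d),
    Function.Injective p ∧ (∀ i, p i ∈ X) ∧ v = simplexVol p }

/-- `Delta k d n` is the supremum, over all `n`-element subsets `X` of the unit cube
`[0,1]^d`, of the minimum `k`-dimensional simplex volume among `(k+1)`-element
subsets of `X`. -/
noncomputable def Delta (k d n : ℕ) : ℝ :=
  sSup { v : ℝ | ∃ X : Finset (EuclideanSpace ℝ (Fin d)), X.card = n ∧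
    (∀ x ∈ X, ∀ i, x i ∈ Set.Icc (0 : ℝ) 1) ∧ v = minSimplexVol d k X }

/-- The minimum, over all `(k+1)`-element subsets of `X ⊆ ℝ^{d+1}`, of the
determinant (parallelepiped volume) of the `k+1` chosen vectors. -/
noncomputable def minDet (d k : ℕ) (X : Finset (EuclideanSpace ℝ (Fin (d + 1)))) : ℝ :=
  sInf { v : ℝ | ∃ p : Fin (k + 1) → EuclideanSpace ℝ (Fin (d + 1)),
    Function.Injective p ∧ (∀ i, p i ∈ X) ∧ v = vol p }

/-- `Delta' k d n` is the supremum, over all `n`-element sets `X` of unit vectors in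
`ℝ^{d+1}`, of the minimum determinant among `(k+1)`-element subsets of `X`. -/
noncomputable def Delta' (k d n : ℕ) : ℝ :=
  sSup { v : ℝ | ∃ X : Finset (EuclideanSpace ℝ (Fin (d + 1))), X.card = n ∧
    (∀ x ∈ X, ‖x‖ = 1) ∧ v = minDet d k X }


/-!
Send a point `x` of the cube to the unit vector in the direction of `(x, 1) ∈ ℝ^{d+1}`; this map is
injective, so it carries `n`-point sets to `n`-point sets of unit vectors. For `x_0, …, x_k` in the
cube, subtracting the first column does not change a Gram determinant, so the vectors `(x_i, 1)`
span the same volume as `(x_0, 1), (x_1 - x_0, 0), …, (x_k - x_0, 0)`. The unit last coordinate of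
`(x_0, 1)` is orthogonal to all the others, so this volume is at least `vol(x_i - x_0)`, which is
`k!` times the volume of the simplex. Normalising divides it by `∏ ‖(x_i, 1)‖ ≤ (d + 1)^((k+1)/2)`,
so `c = k! / (d + 1)^((k+1)/2)` works.
-/

open Matrix
open scoped Nat

section Gram

variable {E : Type*} [NormedAddCommGroup E] [InnerProductSpace ℝ E]

lemma gram_sum_smul {m p : ℕ} (v : Fin m → E) (A : Matrix (Fin m) (Fin p) ℝ) :
    Matrix.gram ℝ (fun j => ∑ i, A i j • v i) = Aᵀ * Matrix.gram ℝ v * A := by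
  ext j j'
  simp only [gram_apply, sum_inner, inner_sum, real_inner_smul_left, real_inner_smul_right,
    mul_apply, transpose_apply, Finset.sum_mul]
  exact Finset.sum_congr rfl fun _ _ => Finset.sum_congr rfl fun _ _ => by ring

lemma gram_smul {m : ℕ} (v : Fin m → E) (c : Fin m → ℝ) :
    Matrix.gram ℝ (fun i => c i • v i) = diagonal c * Matrix.gram ℝ v * diagonal c := by
  convert gram_sum_smul v (diagonal c) using 2
  · simp [diagonal_apply, ite_smul]
  · simp

/-- Subtracting the first vector from the others is a unimodular column operation. -/
lemma det_gram_cons_sub_head {k : ℕ} (v : Fin (k + 1) → E) :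
    (Matrix.gram ℝ (Fin.cons (v 0) fun i => v i.succ - v 0 : Fin (k + 1) → E)).det
      = (Matrix.gram ℝ v).det := by
  let A : Matrix (Fin (k + 1)) (Fin (k + 1)) ℝ :=
    of fun i j => if i = j then 1 else if i = 0 then -1 else 0
  have hA : A.det = 1 := by
    rw [det_of_isUpperTriangular fun i j (hji : j < i) => ?_]
    · simp [A]
    · have hi : i ≠ 0 := (lt_of_le_of_lt (Fin.zero_le j) hji).ne'
      simp [A, hji.ne', hi]
  have hcols : (Fin.cons (v 0) fun i => v i.succ - v 0 : Fin (k + 1) → E)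
      = fun j => ∑ i, A i j • v i := by
    ext j
    refine Fin.cases ?_ (fun j => ?_) j
    · simp [A, Fin.sum_univ_succ, Fin.succ_ne_zero]
    · simp [A, Fin.sum_univ_succ, (Fin.succ_ne_zero _).symm, sub_eq_neg_add]
  rw [hcols, gram_sum_smul, det_mul, det_mul, det_transpose, hA, one_mul, mul_one]

/-- Only the `(0, 0)` entry of the Gram matrix changes, by `‖e‖ ^ 2 = 1`, and the determinant is
affine in row `0`. -/
lemma det_gram_cons_add_of_orthogonal {k : ℕ} (u e : E) (w : Fin k → E)
    (hue : ⟪u, e⟫ = 0) (hwe : ∀ i, ⟪w i, e⟫ = 0) (he : ‖e‖ = 1) :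
    (Matrix.gram ℝ (Fin.cons (u + e) w : Fin (k + 1) → E)).det
      = (Matrix.gram ℝ (Fin.cons u w : Fin (k + 1) → E)).det + (Matrix.gram ℝ w).det := by
  set G := Matrix.gram ℝ (Fin.cons u w : Fin (k + 1) → E)
  have hew : ∀ i, ⟪e, w i⟫ = 0 := fun i => by rw [real_inner_comm, hwe]
  have hrow : Matrix.gram ℝ (Fin.cons (u + e) w : Fin (k + 1) → E)
      = G.updateRow 0 (G 0 + Pi.single 0 1) := by
    ext i j
    refine Fin.cases (Fin.cases ?_ fun j => ?_) (fun i => Fin.cases ?_ fun j => ?_) i j <;>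
      simp [G, inner_add_left, inner_add_right, norm_add_sq_real, hue, hwe, hew, he]
  have hminor : (G.updateRow 0 (Pi.single 0 1)).det = (Matrix.gram ℝ w).det := by
    rw [← adjugate_apply, adjugate_fin_succ_eq_det_submatrix, Fin.succAbove_zero, Fin.val_zero,
      add_zero, pow_zero, one_mul]
    rfl
  rw [hrow, det_updateRow_add, updateRow_eq_self, hminor]

lemma det_gram_le_det_gram_cons_add_of_orthogonal {k : ℕ} (u e : E) (w : Fin k → E)
    (hue : ⟪u, e⟫ = 0) (hwe : ∀ i, ⟪w i, e⟫ = 0) (he : ‖e‖ = 1) :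
    (Matrix.gram ℝ w).det ≤ (Matrix.gram ℝ (Fin.cons (u + e) w : Fin (k + 1) → E)).det := by
  rw [det_gram_cons_add_of_orthogonal u e w hue hwe he]
  exact le_add_of_nonneg_left (posSemidef_gram ℝ _).det_nonneg

end Gram

lemma gram_eq_matrix_gram {d k : ℕ} (v : Fin k → EuclideanSpace ℝ (Fin d)) :
    gram v = Matrix.gram ℝ v := rfl

lemma vol_nonneg {d k : ℕ} (v : Fin k → EuclideanSpace ℝ (Fin d)) : 0 ≤ vol v :=
  Real.sqrt_nonneg _

lemma vol_smul {d k : ℕ} (v : Fin k → EuclideanSpace ℝ (Fin d)) {c : Fin k → ℝ}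
    (hc : ∀ i, 0 ≤ c i) : vol (fun i => c i • v i) = (∏ i, c i) * vol v := by
  rw [vol, vol, gram_eq_matrix_gram, gram_eq_matrix_gram, gram_smul, det_mul,
    det_mul, det_diagonal, mul_comm _ (∏ i, c i), ← mul_assoc, ← sq,
    Real.sqrt_mul (sq_nonneg _), Real.sqrt_sq (Finset.prod_nonneg fun i _ => hc i)]

lemma vol_le_sqrt_factorial {d k : ℕ} (v : Fin k → EuclideanSpace ℝ (Fin d))
    (hv : ∀ i, ‖v i‖ = 1) : vol v ≤ √(k ! : ℝ) := by
  refine Real.sqrt_le_sqrt ((le_abs_self _).trans ?_)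
  have hentry : ∀ i j, |gram v i j| ≤ 1 := fun i j => by
    simpa [_root_.gram, hv] using abs_real_inner_le_norm (v i) (v j)
  simpa using det_le (abv := AbsoluteValue.abs) hentry

lemma factorial_mul_simplexVol {d k : ℕ} (p : Fin (k + 1) → EuclideanSpace ℝ (Fin d)) :
    (k ! : ℝ) * simplexVol p = vol (fun i : Fin k => p i.succ - p 0) := by
  rw [simplexVol, ← mul_assoc, mul_inv_cancel₀ (by positivity), one_mul]

section Homogenize

variable {d : ℕ}

def extendZero (x : EuclideanSpace ℝ (Fin d)) : EuclideanSpace ℝ (Fin (d + 1)) :=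
  WithLp.toLp 2 (Fin.snoc x.ofLp 0)

noncomputable def homogenize (x : EuclideanSpace ℝ (Fin d)) : EuclideanSpace ℝ (Fin (d + 1)) :=
  extendZero x + EuclideanSpace.single (Fin.last d) 1

lemma inner_extendZero (x y : EuclideanSpace ℝ (Fin d)) :
    ⟪extendZero x, extendZero y⟫ = ⟪x, y⟫ := by
  simp [extendZero, PiLp.inner_apply, Fin.sum_univ_castSucc]

lemma inner_extendZero_single_last (x : EuclideanSpace ℝ (Fin d)) :
    ⟪extendZero x, EuclideanSpace.single (Fin.last d) 1⟫ = 0 := by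
  simp [extendZero, EuclideanSpace.inner_single_right]

lemma extendZero_sub (x y : EuclideanSpace ℝ (Fin d)) :
    extendZero (x - y) = extendZero x - extendZero y := by
  ext i
  refine Fin.lastCases ?_ (fun i => ?_) i <;> simp [extendZero]

lemma extendZero_injective : Function.Injective (extendZero (d := d)) := by
  intro x y h
  ext i
  simpa [extendZero] using congrArg (· (Fin.castSucc i)) h

lemma homogenize_last (x : EuclideanSpace ℝ (Fin d)) : homogenize x (Fin.last d) = 1 := by
  simp [homogenize, extendZero]

lemma norm_homogenize_sq (x : EuclideanSpace ℝ (Fin d)) :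
    ‖homogenize x‖ ^ 2 = ‖x‖ ^ 2 + 1 := by
  rw [homogenize, norm_add_sq_real, inner_extendZero_single_last, ← real_inner_self_eq_norm_sq,
    inner_extendZero, real_inner_self_eq_norm_sq]
  simp

lemma norm_homogenize_pos (x : EuclideanSpace ℝ (Fin d)) : 0 < ‖homogenize x‖ :=
  norm_pos_iff.mpr fun h => by simpa [h] using homogenize_last x

lemma norm_homogenize_le_sqrt (x : EuclideanSpace ℝ (Fin d))
    (hx : ∀ i, x i ∈ Set.Icc (0 : ℝ) 1) : ‖homogenize x‖ ≤ √(d + 1) := by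
  refine Real.le_sqrt_of_sq_le ?_
  have hx2 : ‖x‖ ^ 2 ≤ d := by
    rw [EuclideanSpace.norm_sq_eq]
    calc ∑ i, ‖x i‖ ^ 2 ≤ ∑ _i : Fin d, (1 : ℝ) :=
          Finset.sum_le_sum fun i _ => by
            rw [Real.norm_eq_abs, sq_abs]; nlinarith [(hx i).1, (hx i).2]
      _ = d := by simp
  rw [norm_homogenize_sq]; linarith

lemma vol_sub_head_le_vol_homogenize {k : ℕ} (x : Fin (k + 1) → EuclideanSpace ℝ (Fin d)) :
    vol (fun i : Fin k => x i.succ - x 0) ≤ vol (fun i => homogenize (x i)) := by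
  have hgram : Matrix.gram ℝ (fun i : Fin k => x i.succ - x 0)
      = Matrix.gram ℝ (fun i => extendZero (x i.succ - x 0)) := by
    ext i j; simp [inner_extendZero]
  have hcols : (Fin.cons (homogenize (x 0)) fun i => extendZero (x i.succ - x 0) :
      Fin (k + 1) → _) = Fin.cons (homogenize (x 0))
        fun i => homogenize (x i.succ) - homogenize (x 0) := by
    congr 1; ext1 i; simp [homogenize, extendZero_sub]
  refine Real.sqrt_le_sqrt ?_
  rw [gram_eq_matrix_gram, gram_eq_matrix_gram, hgram,
    ← det_gram_cons_sub_head (fun i => homogenize (x i)), ← hcols]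
  exact det_gram_le_det_gram_cons_add_of_orthogonal _ _ _ (inner_extendZero_single_last _)
    (fun i => inner_extendZero_single_last _) (by simp)

noncomputable def sphereLift (x : EuclideanSpace ℝ (Fin d)) : EuclideanSpace ℝ (Fin (d + 1)) :=
  NormedSpace.normalize (homogenize x)

lemma norm_sphereLift (x : EuclideanSpace ℝ (Fin d)) : ‖sphereLift x‖ = 1 :=
  NormedSpace.norm_normalize_eq_one_iff.mpr (norm_pos_iff.mp (norm_homogenize_pos x))

/-- Distinct points `(x, 1)` lie on distinct rays, because their last coordinate is `1`. -/
lemma sphereLift_injective : Function.Injective (sphereLift (d := d)) := by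
  intro x y h
  have hlast : ‖homogenize x‖⁻¹ = ‖homogenize y‖⁻¹ := by
    simpa [sphereLift, NormedSpace.normalize, homogenize_last] using congrArg (· (Fin.last d)) h
  have hxy : homogenize x = homogenize y := by
    rw [← NormedSpace.norm_smul_normalize (homogenize x),
      ← NormedSpace.norm_smul_normalize (homogenize y), inv_injective hlast]
    exact congrArg _ h
  exact extendZero_injective (add_right_cancel hxy)

noncomputable def sphereLiftEmbedding : EuclideanSpace ℝ (Fin d) ↪ EuclideanSpace ℝ (Fin (d + 1)) :=
  ⟨sphereLift, sphereLift_injective⟩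

end Homogenize

lemma mul_simplexVol_le_vol_sphereLift {d k : ℕ} (x : Fin (k + 1) → EuclideanSpace ℝ (Fin d))
    (hx : ∀ i j, x i j ∈ Set.Icc (0 : ℝ) 1) :
    k ! / √(d + 1) ^ (k + 1) * simplexVol x ≤ vol (fun i => sphereLift (x i)) :=
  calc k ! / √(d + 1) ^ (k + 1) * simplexVol x
      = (∏ _i : Fin (k + 1), (√(d + 1))⁻¹) * vol (fun i : Fin k => x i.succ - x 0) := by
        rw [← factorial_mul_simplexVol, Finset.prod_const, Finset.card_fin, inv_pow]; ring
    _ ≤ (∏ i, ‖homogenize (x i)‖⁻¹) * vol (fun i => homogenize (x i)) := by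
        gcongr with i
        · exact vol_nonneg _
        · exact norm_homogenize_pos _
        · exact norm_homogenize_le_sqrt _ (hx i)
        · exact vol_sub_head_le_vol_homogenize x
    _ = vol (fun i => sphereLift (x i)) :=
        (vol_smul _ fun i => inv_nonneg.mpr (norm_nonneg _)).symm

lemma exists_injective_fin_mem {α : Type*} (X : Finset α) {m : ℕ} (h : m ≤ X.card) :
    ∃ p : Fin m → α, Function.Injective p ∧ ∀ i, p i ∈ X := by
  obtain ⟨f⟩ := Function.Embedding.nonempty_of_card_le (α := Fin m) (β := X) (by simpa using h)
  exact ⟨fun i => f i, Subtype.val_injective.comp f.injective, fun i => (f i).2⟩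

lemma minSimplexVol_le {d k : ℕ} {X : Finset (EuclideanSpace ℝ (Fin d))}
    {p : Fin (k + 1) → EuclideanSpace ℝ (Fin d)} (hp : Function.Injective p)
    (hpX : ∀ i, p i ∈ X) : minSimplexVol d k X ≤ simplexVol p :=
  csInf_le ⟨0, by rintro _ ⟨q, -, -, rfl⟩; exact mul_nonneg (by positivity) (vol_nonneg _)⟩
    ⟨p, hp, hpX, rfl⟩

lemma minDet_nonneg (d k : ℕ) (X : Finset (EuclideanSpace ℝ (Fin (d + 1)))) :
    0 ≤ minDet d k X :=
  Real.sInf_nonneg (by rintro _ ⟨p, -, -, rfl⟩; exact vol_nonneg p)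

lemma minDet_le_vol {d k : ℕ} {X : Finset (EuclideanSpace ℝ (Fin (d + 1)))}
    {p : Fin (k + 1) → EuclideanSpace ℝ (Fin (d + 1))} (hp : Function.Injective p)
    (hpX : ∀ i, p i ∈ X) : minDet d k X ≤ vol p :=
  csInf_le ⟨0, by rintro _ ⟨q, -, -, rfl⟩; exact vol_nonneg q⟩ ⟨p, hp, hpX, rfl⟩

lemma minDet_le_sqrt_factorial {d k : ℕ} {X : Finset (EuclideanSpace ℝ (Fin (d + 1)))}
    (hX : ∀ x ∈ X, ‖x‖ = 1) (hcard : k < X.card) :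
    minDet d k X ≤ √((k + 1) ! : ℝ) := by
  obtain ⟨p, hp, hpX⟩ := exists_injective_fin_mem X hcard
  exact (minDet_le_vol hp hpX).trans (vol_le_sqrt_factorial p fun i => hX _ (hpX i))

lemma Delta'_nonneg (k d n : ℕ) : 0 ≤ Delta' k d n :=
  Real.sSup_nonneg (by rintro _ ⟨X, -, -, rfl⟩; exact minDet_nonneg d k X)

lemma minDet_le_Delta' {k d n : ℕ} {X : Finset (EuclideanSpace ℝ (Fin (d + 1)))}
    (hX : ∀ x ∈ X, ‖x‖ = 1) (hcard : X.card = n) (hn : k < n) : minDet d k X ≤ Delta' k d n :=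
  le_csSup ⟨_, by rintro _ ⟨Y, hY, hYunit, rfl⟩; exact minDet_le_sqrt_factorial hYunit (hY ▸ hn)⟩
    ⟨X, hcard, hX, rfl⟩

lemma mul_minSimplexVol_le_minDet_map {d k : ℕ} {X : Finset (EuclideanSpace ℝ (Fin d))}
    (hX : ∀ x ∈ X, ∀ i, x i ∈ Set.Icc (0 : ℝ) 1) (hcard : k < X.card) :
    k ! / √(d + 1) ^ (k + 1) * minSimplexVol d k X
      ≤ minDet d k (X.map sphereLiftEmbedding) := by
  obtain ⟨p, hp, hpX⟩ := exists_injective_fin_mem (m := k + 1) (X.map sphereLiftEmbedding)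
    (by rwa [Finset.card_map])
  refine le_csInf ⟨_, p, hp, hpX, rfl⟩ ?_
  rintro _ ⟨p, hp, hpX, rfl⟩
  choose q hqX hq using fun i => Finset.mem_map.mp (hpX i)
  have hqinj : Function.Injective q := fun i j hij => hp (by rw [← hq, ← hq, hij])
  calc k ! / √(d + 1) ^ (k + 1) * minSimplexVol d k X
      ≤ k ! / √(d + 1) ^ (k + 1) * simplexVol q := by
        gcongr
        exact minSimplexVol_le hqinj hqX
    _ ≤ vol (fun i => sphereLift (q i)) :=
        mul_simplexVol_le_vol_sphereLift q fun i => hX _ (hqX i)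
    _ = vol p := congrArg vol (funext hq)

theorem reduction_lower_general (k d : ℕ) :
    ∃ c : ℝ, 0 < c ∧ ∀ n : ℕ, k < n → c * Delta k d n ≤ Delta' k d n := by
  have hc : (0 : ℝ) < k ! / √(d + 1) ^ (k + 1) := by positivity
  refine ⟨_, hc, fun n hn => ?_⟩
  rw [← le_div_iff₀' hc]
  refine Real.sSup_le ?_ (div_nonneg (Delta'_nonneg k d n) hc.le)
  rintro _ ⟨X, hXcard, hX, rfl⟩
  rw [le_div_iff₀' hc]
  calc _ ≤ minDet d k (X.map sphereLiftEmbedding) :=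
        mul_minSimplexVol_le_minDet_map hX (hXcard ▸ hn)
    _ ≤ Delta' k d n :=
        minDet_le_Delta' (by simp [sphereLiftEmbedding, norm_sphereLift])
          (by rw [Finset.card_map, hXcard]) hn

/-- **Proposition 2 (first inequality of the reduction).** For `1 ≤ k ≤ d` there is a
constant `c > 0` (depending only on `d` and `k`) such that for all `n > k`,
`c · Δ_{k,d}(n) ≤ Δ'_{k,d}(n)`. -/
theorem reduction_lower (k d : ℕ) (hk : 1 ≤ k) (hkd : k ≤ d) :
    ∃ c : ℝ, 0 < c ∧ ∀ n : ℕ, k < n → c * Delta k d n ≤ Delta' k d n :=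
  reduction_lower_general k d
end

section
/- For every integer d ≥ 1 there exists a constant c' > 0 (depending only on d) such that for every nonempty finite set Y of unit vectors in ℝ^{d+1} there exists a rotation R ∈ SO(d+1) with the following property: at least c'·|Y| of the points y ∈ Y satisfy (Ry)_{d+1} > 0 and the central projection Ry/(Ry)_{d+1} of Ry onto the hyperplane {x ∈ ℝ^{d+1} : x_{d+1} = 1} lies in the cube [0,1]^d × {1}. -/
/-!
The unit vectors whose central projection lies in the cube contain a spherical cap `B(v, ε)`,
because the cone over the open cube is open. Cover the sphere by `N` balls of radius `ε`; by
pigeonhole one of them, centred at `x`, contains at least `|Y| / N` points of `Y`, and a rotation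
taking `x` to `v` carries all of them into the cap. Hence `c' = 1 / N` works.
-/

open scoped Matrix

open Module Submodule

section
variable {𝕜 E : Type*} [RCLike 𝕜] [NormedAddCommGroup E] [InnerProductSpace 𝕜 E]
  [FiniteDimensional 𝕜 E]

theorem Submodule.det_reflection_orthogonal_span_singleton {z : E} (hz : z ≠ 0) :
    LinearMap.det (𝕜 ∙ z)ᗮ.reflection.toLinearMap = -1 := by
  rw [det_reflection, orthogonal_orthogonal, finrank_span_singleton hz, pow_one]

theorem exists_ne_zero_inner_eq_zero (hE : 2 ≤ finrank 𝕜 E) (v : E) :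
    ∃ w ≠ 0, inner 𝕜 w v = 0 := by
  have hdim : 1 ≤ finrank 𝕜 (𝕜 ∙ v)ᗮ := by
    have := (𝕜 ∙ v).finrank_add_finrank_orthogonal
    have : finrank 𝕜 (𝕜 ∙ v) ≤ 1 := by simpa using finrank_span_le_card (R := 𝕜) {v}
    omega
  obtain ⟨w, hw, hw0⟩ := exists_mem_ne_zero_of_ne_bot (one_le_finrank_iff.mp hdim)
  exact ⟨w, hw0, mem_orthogonal_singleton_iff_inner_left.mp hw⟩

end

theorem exists_linearIsometryEquiv_det_eq_one_apply_eq {E : Type*} [NormedAddCommGroup E]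
    [InnerProductSpace ℝ E] [FiniteDimensional ℝ E] (hE : 2 ≤ finrank ℝ E) {u v : E}
    (huv : ‖u‖ = ‖v‖) :
    ∃ f : E ≃ₗᵢ[ℝ] E, LinearMap.det (f.toLinearEquiv : E →ₗ[ℝ] E) = 1 ∧ f u = v := by
  obtain rfl | hne := eq_or_ne u v
  · exact ⟨.refl ℝ E, LinearMap.det_id, rfl⟩
  obtain ⟨w, hw0, hwv⟩ := exists_ne_zero_inner_eq_zero hE v
  -- `u ↦ v` by a reflection; a second reflection, fixing `v`, restores the orientation
  refine ⟨(ℝ ∙ (u - v))ᗮ.reflection.trans (ℝ ∙ w)ᗮ.reflection, ?_, ?_⟩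
  · change LinearMap.det
      ((ℝ ∙ w)ᗮ.reflection.toLinearMap ∘ₗ (ℝ ∙ (u - v))ᗮ.reflection.toLinearMap) = 1
    rw [LinearMap.det_comp, det_reflection_orthogonal_span_singleton hw0,
      det_reflection_orthogonal_span_singleton (sub_ne_zero.mpr hne)]
    norm_num
  · rw [LinearIsometryEquiv.trans_apply, reflection_sub huv]
    exact reflection_mem_subspace_eq_self (mem_orthogonal_singleton_iff_inner_right.mpr hwv)

theorem LinearIsometryEquiv.exists_specialOrthogonalGroup_mulVec_eq {ι : Type*} [Fintype ι]
    [DecidableEq ι] (f : EuclideanSpace ℝ ι ≃ₗᵢ[ℝ] EuclideanSpace ℝ ι)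
    (hf : LinearMap.det (f.toLinearEquiv : EuclideanSpace ℝ ι →ₗ[ℝ] EuclideanSpace ℝ ι) = 1) :
    ∃ R : Matrix.specialOrthogonalGroup ι ℝ,
      ∀ y, (R : Matrix ι ι ℝ) *ᵥ WithLp.ofLp y = WithLp.ofLp (f y) := by
  set b := (EuclideanSpace.basisFun ι ℝ).toBasis
  refine ⟨⟨f.toMatrix b b, Matrix.mem_specialOrthogonalGroup_iff.mpr
    ⟨f.toMatrix_mem_unitaryGroup _ _, by rw [LinearMap.det_toMatrix, hf]⟩⟩, fun y => ?_⟩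
  have h := LinearMap.toMatrix_mulVec_repr b b f.toLinearEquiv.toLinearMap y
  simp only [b] at h
  exact h

open Classical in
theorem IsCompact.exists_pos_forall_exists_le_card_filter_mem_ball {X : Type*}
    [PseudoMetricSpace X] {K : Set X} (hK : IsCompact K) (hKne : K.Nonempty) {ε : ℝ}
    (hε : 0 < ε) :
    ∃ c : ℝ, 0 < c ∧ ∀ Y : Finset X, ↑Y ⊆ K →
      ∃ x ∈ K, c * Y.card ≤ (Y.filter (· ∈ Metric.ball x ε)).card := by
  obtain ⟨t, htK, htfin, hcover⟩ := hK.finite_cover_balls hε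
  have hcenter : ∀ y ∈ K, ∃ x ∈ htfin.toFinset, y ∈ Metric.ball x ε := fun y hy => by
    simpa using hcover hy
  choose! center hcenter_mem hmem_ball using hcenter
  have htne : htfin.toFinset.Nonempty := by
    obtain ⟨y, hy⟩ := hKne
    exact ⟨_, hcenter_mem y hy⟩
  refine ⟨(htfin.toFinset.card : ℝ)⁻¹, by positivity, fun Y hY => ?_⟩
  obtain ⟨c, hct, hc⟩ := Finset.exists_le_card_fiber_of_nsmul_le_card_of_maps_to
    (fun y hy => hcenter_mem y (hY hy)) htne
    (b := (htfin.toFinset.card : ℝ)⁻¹ * Y.card)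
    (by rw [nsmul_eq_mul, mul_inv_cancel_left₀ (by positivity)])
  refine ⟨c, htK (htfin.mem_toFinset.mp hct), hc.trans ?_⟩
  gcongr with y hy
  rintro rfl
  exact hmem_ball y (hY hy)

theorem exists_norm_eq_one_ball_subset_of_isOpen {F : Type*} [NormedAddCommGroup F]
    [NormedSpace ℝ F] {C : Set F} (hC : IsOpen C) (hsmul : ∀ t : ℝ, 0 < t → ∀ z ∈ C, t • z ∈ C)
    {w : F} (hw : w ∈ C) (hw0 : w ≠ 0) : ∃ v, ‖v‖ = 1 ∧ ∃ ε > 0, Metric.ball v ε ⊆ C :=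
  ⟨‖w‖⁻¹ • w, norm_smul_inv_norm hw0,
    Metric.isOpen_iff.mp hC _ (hsmul _ (inv_pos.mpr (norm_pos_iff.mpr hw0)) w hw)⟩

def CentralProjectionMemCube {d : ℕ} (z : Fin (d + 1) → ℝ) : Prop :=
  0 < z (Fin.last d) ∧ ∀ i : Fin d, z i.castSucc / z (Fin.last d) ∈ Set.Icc (0 : ℝ) 1

theorem exists_norm_eq_one_ball_subset_centralProjectionMemCube (d : ℕ) :
    ∃ v : EuclideanSpace ℝ (Fin (d + 1)), ‖v‖ = 1 ∧
      ∃ ε > 0, ∀ z ∈ Metric.ball v ε, CentralProjectionMemCube (WithLp.ofLp z) := by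
  set C : Set (EuclideanSpace ℝ (Fin (d + 1))) :=
    {z | 0 < z (Fin.last d) ∧ ∀ i : Fin d, 0 < z i.castSucc ∧ z i.castSucc < z (Fin.last d)}
  have hC : IsOpen C := by
    simp only [C, Set.ofPred_and, Set.ofPred_forall]
    exact (isOpen_lt continuous_const (by fun_prop)).inter <| isOpen_iInter_of_finite fun i =>
      (isOpen_lt continuous_const (by fun_prop)).inter (isOpen_lt (by fun_prop) (by fun_prop))
  have hsmul : ∀ t : ℝ, 0 < t → ∀ z ∈ C, t • z ∈ C := by
    rintro t ht z ⟨hlast, hz⟩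
    refine ⟨by simpa using mul_pos ht hlast, fun i => ?_⟩
    simpa using And.intro (mul_pos ht (hz i).1) (mul_lt_mul_of_pos_left (hz i).2 ht)
  set w : EuclideanSpace ℝ (Fin (d + 1)) :=
    WithLp.toLp 2 fun i => if i = Fin.last d then 2 else 1
  have hw : w ∈ C := by
    refine ⟨by simp [w], fun i => ?_⟩
    simp [w, (Fin.castSucc_lt_last i).ne]
  have hw0 : w ≠ 0 := fun h => by simpa [h] using hw.1
  obtain ⟨v, hv, ε, hε, hball⟩ := exists_norm_eq_one_ball_subset_of_isOpen hC hsmul hw hw0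
  refine ⟨v, hv, ε, hε, fun z hz => ?_⟩
  obtain ⟨hlast, hcoord⟩ := hball hz
  exact ⟨hlast, fun i => ⟨div_nonneg (hcoord i).1.le hlast.le,
    (div_le_one hlast).mpr (hcoord i).2.le⟩⟩

/-- For every `d ≥ 1` there is a constant `c' > 0` depending only on `d` such that for
every nonempty finite set `Y` of unit vectors in `ℝ^{d+1}` there is a rotation
`R ∈ SO(d+1)` such that at least `c' · |Y|` of the points `y ∈ Y` satisfy
`(R y)_{d+1} > 0` and the central projection `R y / (R y)_{d+1}` onto the hyperplane
`{x : x_{d+1} = 1}` lies in the cube `[0,1]^d × {1}`. -/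
theorem random_rotation_projection (d : ℕ) (hd : 1 ≤ d) :
    ∃ c' : ℝ, 0 < c' ∧
      ∀ Y : Finset (EuclideanSpace ℝ (Fin (d + 1))), Y.Nonempty →
        (∀ y ∈ Y, ‖y‖ = 1) →
        ∃ R : Matrix.specialOrthogonalGroup (Fin (d + 1)) ℝ,
          c' * (Y.card : ℝ) ≤
            (Set.ncard {y : EuclideanSpace ℝ (Fin (d + 1)) | y ∈ Y ∧
              0 < ((R : Matrix (Fin (d + 1)) (Fin (d + 1)) ℝ).mulVec (fun i => y i))
                    (Fin.last d) ∧
              ∀ i : Fin d,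
                ((R : Matrix (Fin (d + 1)) (Fin (d + 1)) ℝ).mulVec (fun i => y i)) i.castSucc /
                    ((R : Matrix (Fin (d + 1)) (Fin (d + 1)) ℝ).mulVec (fun i => y i))
                      (Fin.last d) ∈
                  Set.Icc (0 : ℝ) 1} : ℝ) := by
  obtain ⟨v, hv, ε, hε, hball⟩ := exists_norm_eq_one_ball_subset_centralProjectionMemCube d
  obtain ⟨c, hc, hpigeon⟩ := (isCompact_sphere (0 : EuclideanSpace ℝ (Fin (d + 1))) 1)
    |>.exists_pos_forall_exists_le_card_filter_mem_ball ⟨v, by simpa using hv⟩ hε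
  refine ⟨c, hc, fun Y _ hY => ?_⟩
  obtain ⟨x, hx, hcard⟩ := hpigeon Y fun y hy => by simpa using hY y hy
  obtain ⟨f, hfdet, hfx⟩ := exists_linearIsometryEquiv_det_eq_one_apply_eq
    (by simpa using Nat.succ_le_succ hd) ((mem_sphere_zero_iff_norm.mp hx).trans hv.symm)
  obtain ⟨R, hR⟩ := f.exists_specialOrthogonalGroup_mulVec_eq hfdet
  refine ⟨R, hcard.trans ?_⟩
  classical
  rw [← Set.ncard_coe_finset]
  refine Nat.cast_le.mpr <|
    Set.ncard_le_ncard (fun y hy => ?_) (Y.finite_toSet.subset fun y hy => hy.1)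
  obtain ⟨hyY, hyx⟩ := Finset.mem_filter.mp hy
  have hfy : f y ∈ Metric.ball v ε := by rwa [Metric.mem_ball, ← hfx, f.dist_map]
  refine ⟨hyY, ?_⟩
  change CentralProjectionMemCube ((R : Matrix (Fin (d + 1)) (Fin (d + 1)) ℝ) *ᵥ WithLp.ofLp y)
  rw [hR]
  exact hball _ hfy
end
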